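/- Let G and G' be finite simple graphs with vertex sets V(G) = {v_1, …, v_n} and V(G') = {v'_1, …, v'_n}, where 1 < k < n, such that d(v_m) = d(v'_m) for every m ∈ {1,…,n}. Suppose that: (3) |d(v_i) − d(v_j)| ≠ 1 for every i ∈ {1,…,k} and every j ∈ {1,…,n} with j ≠ i; and (5) for every i ∈ {2,…,k}, every vertex of G having degree d(v_i) lies in {v_2,…,v_k}. Then every isomorphism f : G − v_1 → G' − v'_1 maps the set {v_2, …, v_k} onto the set {v'_2, …, v'_k}. -/
import Mathlib

section Aux

variable {n : ℕ}

/-- Degree decomposition for vertex-deleted subgraphs: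
`d_G(x) = deg_{G - v}(x) + [x ∼ v]`. -/
lemma aux_deg (G : SimpleGraph (Fin n)) [DecidableRel G.Adj] (v : Fin n)
    (x : ({v}ᶜ : Set (Fin n))) :
    G.degree (x : Fin n) =
      Nat.card ((G.induce ({v}ᶜ : Set (Fin n))).neighborSet x) +
        (if G.Adj (x : Fin n) v then 1 else 0) := by
  have e : ((G.induce ({v}ᶜ : Set (Fin n))).neighborSet x) ≃
      ↥(G.neighborSet (x : Fin n) \ {v}) :=
    { toFun := fun y => ⟨((y : ({v}ᶜ : Set (Fin n))) : Fin n), y.2, (y : ({v}ᶜ : Set (Fin n))).2⟩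
      invFun := fun y => ⟨⟨(y : Fin n), y.2.2⟩, y.2.1⟩
      left_inv := fun y => rfl
      right_inv := fun y => rfl }
  rw [Nat.card_congr e, Nat.card_coe_set_eq]
  by_cases h : G.Adj (x : Fin n) v
  · rw [if_pos h]
    have hv : v ∈ G.neighborSet (x : Fin n) := h
    rw [Set.ncard_diff_singleton_add_one hv (Set.toFinite _)]
    rw [← SimpleGraph.card_neighborSet_eq_degree, ← Nat.card_coe_set_eq,
      Nat.card_eq_fintype_card]
  · rw [if_neg h, add_zero]
    have hv : v ∉ G.neighborSet (x : Fin n) := h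
    rw [Set.diff_singleton_eq_self hv, ← SimpleGraph.card_neighborSet_eq_degree,
      ← Nat.card_coe_set_eq, Nat.card_eq_fintype_card]

/-- split `|a - b| ≠ 1` into the two facts usable by `omega`. -/
lemma aux_abs {a b : ℕ} (h : |(a : ℤ) - (b : ℤ)| ≠ 1) :
    (a : ℤ) - b ≠ 1 ∧ (a : ℤ) - b ≠ -1 := by
  constructor <;> intro he <;> apply h <;> rw [he] <;> norm_num

/-- The main argument, with the deleted vertex `v` as an explicit parameter. -/
lemma main_aux (n k : ℕ) (hk1 : 1 < k) (hkn : k < n)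
    (G G' : SimpleGraph (Fin n)) [DecidableRel G.Adj] [DecidableRel G'.Adj]
    (hdeg : ∀ m : Fin n, G.degree m = G'.degree m)
    (h3 : ∀ i j : Fin n, (i : ℕ) < k → j ≠ i →
        |(G.degree i : ℤ) - (G.degree j : ℤ)| ≠ 1)
    (h5 : ∀ i : Fin n, 0 < (i : ℕ) → (i : ℕ) < k →
        ∀ w : Fin n, G.degree w = G.degree i → 0 < (w : ℕ) ∧ (w : ℕ) < k)
    (v : Fin n) (hv0 : (v : ℕ) = 0)
    (f : G.induce ({v}ᶜ : Set (Fin n)) ≃g G'.induce ({v}ᶜ : Set (Fin n))) :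
    (fun x : ({v}ᶜ : Set (Fin n)) => ((f x : Fin n))) ''
        {x | 0 < ((x : Fin n) : ℕ) ∧ ((x : Fin n) : ℕ) < k} =
      {w : Fin n | 0 < (w : ℕ) ∧ (w : ℕ) < k} := by
  have hcard : ∀ x : ({v}ᶜ : Set (Fin n)),
      Nat.card ((G.induce ({v}ᶜ : Set (Fin n))).neighborSet x) =
      Nat.card ((G'.induce ({v}ᶜ : Set (Fin n))).neighborSet (f x)) :=
    fun x => Nat.card_congr (f.mapNeighborSet x)
  have key : ∀ x : ({v}ᶜ : Set (Fin n)), ((x : Fin n) : ℕ) < k →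
      G.degree ((f x : Fin n)) = G.degree (x : Fin n) := by
    intro x hx
    by_cases hxy : ((f x : Fin n)) = (x : Fin n)
    · rw [hxy]
    · have h1 := aux_deg G v x
      have h2 := aux_deg G' v (f x)
      rw [← hdeg] at h2
      rw [hcard x] at h1
      obtain ⟨ha, hb⟩ := aux_abs (h3 (x : Fin n) ((f x : Fin n)) hx hxy)
      have ea : (if G.Adj (x : Fin n) v then 1 else 0) ≤ 1 := by split <;> omega
      have eb : (if G'.Adj ((f x : Fin n)) v then 1 else 0) ≤ 1 := by split <;> omega
      omega
  have fwd : ∀ x : ({v}ᶜ : Set (Fin n)),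
      0 < ((x : Fin n) : ℕ) → ((x : Fin n) : ℕ) < k →
      0 < (((f x : Fin n)) : ℕ) ∧ (((f x : Fin n)) : ℕ) < k := by
    intro x h0 hk
    exact h5 (x : Fin n) h0 hk ((f x : Fin n)) (key x hk)
  apply Set.eq_of_subset_of_subset
  · rintro w ⟨x, ⟨hx0, hxk⟩, rfl⟩
    exact fwd x hx0 hxk
  · rintro w ⟨hw0, hwk⟩
    have hwv : w ∈ ({v}ᶜ : Set (Fin n)) := by
      simp only [Set.mem_compl_iff, Set.mem_singleton_iff]
      intro h; rw [h, hv0] at hw0; omega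
    set x : ({v}ᶜ : Set (Fin n)) := f.symm ⟨w, hwv⟩ with hx
    have hfx : f x = ⟨w, hwv⟩ := by rw [hx]; exact f.apply_symm_apply _
    have hdx : G.degree (x : Fin n) = G.degree w := by
      by_cases hxy : ((x : Fin n)) = w
      · rw [hxy]
      · have h1 := aux_deg G v x
        have h2 := aux_deg G' v (f x)
        rw [← hdeg] at h2
        rw [hcard x, hfx] at h1
        simp only [hfx] at h2
        obtain ⟨ha, hb⟩ := aux_abs (h3 w (x : Fin n) hwk (by simpa using hxy))
        have ea : (if G.Adj (x : Fin n) v then 1 else 0) ≤ 1 := by split <;> omega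
        have eb : (if G'.Adj w v then 1 else 0) ≤ 1 := by split <;> omega
        have hc : G.degree ((f x : Fin n)) = G.degree w := by rw [hfx]
        omega
    have hxS := h5 w hw0 hwk (x : Fin n) hdx
    exact ⟨x, hxS, congrArg Subtype.val hfx⟩

end Aux

/-- Under the degree hypotheses (3) and (5), every isomorphism
`f : G − v_1 → G' − v'_1` maps `{v_2,…,v_k}` onto `{v'_2,…,v'_k}`.
Vertices are indexed by `Fin n`, with `v_j` (resp. `v'_j`) corresponding to
index `⟨j-1, _⟩`; in particular `v_1` is `⟨0, _⟩`. -/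
theorem stmt_4 (n k : ℕ) (hk1 : 1 < k) (hkn : k < n)
    (G G' : SimpleGraph (Fin n)) [DecidableRel G.Adj] [DecidableRel G'.Adj]
    (hdeg : ∀ m : Fin n, G.degree m = G'.degree m)
    -- (3) |d(v_i) − d(v_j)| ≠ 1 for i ∈ {1,…,k}, j ≠ i
    (h3 : ∀ i j : Fin n, (i : ℕ) < k → j ≠ i →
        |(G.degree i : ℤ) - (G.degree j : ℤ)| ≠ 1)
    -- (5) every vertex of degree d(v_i), i ∈ {2,…,k}, lies in {v_2,…,v_k}
    (h5 : ∀ i : Fin n, 0 < (i : ℕ) → (i : ℕ) < k →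
        ∀ w : Fin n, G.degree w = G.degree i → 0 < (w : ℕ) ∧ (w : ℕ) < k) :
    ∀ f : G.induce ({(⟨0, by omega⟩ : Fin n)}ᶜ : Set (Fin n)) ≃g
          G'.induce ({(⟨0, by omega⟩ : Fin n)}ᶜ : Set (Fin n)),
      (fun x : ({(⟨0, by omega⟩ : Fin n)}ᶜ : Set (Fin n)) => ((f x : Fin n))) ''
          {x | 0 < ((x : Fin n) : ℕ) ∧ ((x : Fin n) : ℕ) < k} =
        {w : Fin n | 0 < (w : ℕ) ∧ (w : ℕ) < k} := by
  intro f
  exact main_aux n k hk1 hkn G G' hdeg h3 h5 ⟨0, by omega⟩ rfl f
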